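/- arXiv:1902.01736 — 4 statements merged into one kernel-verified Lean document; each statement's English description precedes it below -/
import Mathlib

section
/- Let k be a nonnegative integer and suppose u ∈ 𝒫_{2k}(ℝⁿ) can be written as u(x,t) = p₀(x) + t·p₁(x) + ⋯ + tᵏ·p_k(x) for functions p₀, …, p_k : ℝⁿ → ℝ. Then for each j with 0 ≤ j ≤ k there is a constant C_j such that |p_j(x)| ≤ C_j (1 + |x|^{2(k−j)}) for all x ∈ ℝⁿ. -/
open MeasureTheory

/-- The `i`-th spatial partial derivative of `u` at `x`. -/
noncomputable def pd (n : ℕ) (u : EuclideanSpace ℝ (Fin n) → ℝ) (i : Fin n)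
    (x : EuclideanSpace ℝ (Fin n)) : ℝ :=
  deriv (fun s : ℝ => u (WithLp.toLp 2 (Function.update x i s))) (x i)

/-- The spatial Laplacian `Δu = ∑ᵢ ∂²u/∂xᵢ²`. -/
noncomputable def lap (n : ℕ) (u : EuclideanSpace ℝ (Fin n) → ℝ)
    (x : EuclideanSpace ℝ (Fin n)) : ℝ :=
  ∑ i, pd n (fun y => pd n u i y) i x

/-- `u ∈ 𝒫_d(ℝⁿ)`: `u` is a smooth ancient solution of the heat equation `∂ₜu = Δu`
on `ℝⁿ × (-∞, 0]` with `sup_{B_R(0) × [-R²,0]} |u| ≤ C_u (1+R)^d` for all `R > 0`. -/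
def memP (n : ℕ) (d : ℝ) (u : EuclideanSpace ℝ (Fin n) → ℝ → ℝ) : Prop :=
  ContDiffOn ℝ (⊤ : ℕ∞) (fun p : EuclideanSpace ℝ (Fin n) × ℝ => u p.1 p.2)
      (Set.univ ×ˢ Set.Iic 0) ∧
  (∀ x, ∀ t ≤ (0 : ℝ), derivWithin (u x) (Set.Iic 0) t = lap n (fun y => u y t) x) ∧
  ∃ C : ℝ, ∀ R > (0 : ℝ), ∀ x ∈ Metric.ball (0 : EuclideanSpace ℝ (Fin n)) R,
    ∀ t ∈ Set.Icc (-R ^ 2) (0 : ℝ), |u x t| ≤ C * (1 + R) ^ d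

lemma aux_pow (m : ℕ) (a : ℝ) (ha : 0 ≤ a) : (1 + a) ^ m ≤ 2 ^ m * (1 + a ^ m) := by
  rcases le_total a 1 with h | h
  · calc (1 + a) ^ m ≤ 2 ^ m := pow_le_pow_left₀ (by linarith) (by linarith) m
      _ ≤ 2 ^ m * (1 + a ^ m) := by
          have : (0:ℝ) ≤ a ^ m := pow_nonneg ha m
          nlinarith [pow_pos (by norm_num : (0:ℝ) < 2) m]
  · calc (1 + a) ^ m ≤ (2 * a) ^ m := pow_le_pow_left₀ (by linarith) (by linarith) m
      _ = 2 ^ m * a ^ m := mul_pow 2 a m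
      _ ≤ 2 ^ m * (1 + a ^ m) := by
          have : (0:ℝ) < 2 ^ m := pow_pos (by norm_num) m
          nlinarith

/-- Lemma 2.3 of the paper: if `u ∈ 𝒫_{2k}(ℝⁿ)` can be written as
`u(x,t) = p₀(x) + t p₁(x) + ⋯ + tᵏ p_k(x)`, then `|p_j(x)| ≤ C_j (1 + |x|^{2(k-j)})`. -/
theorem coefficient_growth (n k : ℕ)
    (u : EuclideanSpace ℝ (Fin n) → ℝ → ℝ)
    (p : ℕ → EuclideanSpace ℝ (Fin n) → ℝ)
    (hu : memP n (2 * k) u)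
    (hdecomp : ∀ x, ∀ t ≤ (0 : ℝ), u x t = ∑ j ∈ Finset.range (k + 1), t ^ j * p j x) :
    ∀ j ≤ k, ∃ C : ℝ, ∀ x : EuclideanSpace ℝ (Fin n),
      |p j x| ≤ C * (1 + ‖x‖ ^ (2 * (k - j))) := by
  obtain ⟨-, -, C, hC⟩ := hu
  intro j hj
  set v : Fin (k+1) → ℝ := fun i => -((i : ℝ) + 1) with hv
  have hvinj : Function.Injective v := by
    intro a b hab
    simp only [hv, neg_inj, add_left_inj] at hab
    exact Fin.ext (by exact_mod_cast hab)
  set M := Matrix.vandermonde v with hM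
  have hMdet : M.det ≠ 0 := Matrix.det_vandermonde_ne_zero_iff.mpr hvinj
  set j' : Fin (k+1) := ⟨j, by omega⟩ with hj'
  refine ⟨(∑ i, |M⁻¹ j' i|) * (|C| * (k+2) ^ (2*k)) * 2 ^ (2*(k-j)), fun x => ?_⟩
  have hx0 : (0:ℝ) ≤ ‖x‖ := norm_nonneg x
  set s : ℝ := (1 + ‖x‖) ^ 2 with hs
  have hs0 : 0 < s := by positivity
  set R : ℝ := (k+1) * (1 + ‖x‖) with hR
  have hR0 : 0 < R := by positivity
  -- bound on u values at sample points
  have hub : ∀ i : Fin (k+1), |u x (s * v i)| ≤ |C| * (k+2) ^ (2*k) * (1 + ‖x‖) ^ (2*k) := by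
    intro i
    have hxball : x ∈ Metric.ball (0 : EuclideanSpace ℝ (Fin n)) R := by
      rw [Metric.mem_ball, dist_zero_right]
      have hk0 : (0:ℝ) ≤ (k:ℝ) := Nat.cast_nonneg k
      nlinarith
    have hik' : (i : ℝ) + 1 ≤ (k:ℝ) + 1 := by
      have h := Nat.lt_succ_iff.mp i.isLt
      exact_mod_cast Nat.succ_le_succ h
    have ht : s * v i ∈ Set.Icc (-R^2) (0:ℝ) := by
      constructor
      · have hk0 : (0:ℝ) ≤ (k:ℝ) := Nat.cast_nonneg k
        have h2 : (i:ℝ)+1 ≤ ((k:ℝ)+1)^2 := by nlinarith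
        have h1 : s * ((i:ℝ)+1) ≤ R^2 := by
          have := mul_le_mul_of_nonneg_left h2 hs0.le
          calc s * ((i:ℝ)+1) ≤ s * ((k:ℝ)+1)^2 := this
            _ = R^2 := by rw [hR, hs]; ring
        simp only [hv]
        nlinarith
      · simp only [hv]
        nlinarith
    have := hC R hR0 x hxball (s * v i) ht
    have hrw : (1 + R) ^ (2 * (k:ℝ)) = (1 + R) ^ (2*k : ℕ) := by
      rw [show (2 * (k:ℝ)) = ((2*k : ℕ) : ℝ) by push_cast; ring, Real.rpow_natCast]
    rw [hrw] at this
    have h2 : C * (1 + R) ^ (2*k) ≤ |C| * (1 + R) ^ (2*k) := by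
      have : (0:ℝ) ≤ (1 + R) ^ (2*k) := by positivity
      nlinarith [le_abs_self C]
    have h3 : (1 + R) ^ (2*k) ≤ ((k+2) * (1 + ‖x‖)) ^ (2*k) := by
      apply pow_le_pow_left₀ (by linarith)
      rw [hR]; nlinarith
    calc |u x (s * v i)| ≤ C * (1 + R) ^ (2*k) := this
      _ ≤ |C| * (1 + R) ^ (2*k) := h2
      _ ≤ |C| * (((k:ℝ)+2) * (1 + ‖x‖)) ^ (2*k) := by
          exact mul_le_mul_of_nonneg_left h3 (abs_nonneg C)
      _ = |C| * ((k:ℝ)+2) ^ (2*k) * (1 + ‖x‖) ^ (2*k) := by rw [mul_pow]; ring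
  -- linear algebra
  set pv : Fin (k+1) → ℝ := fun i => s ^ (i:ℕ) * p i x with hpv
  have hmv : M.mulVec pv = fun i => u x (s * v i) := by
    funext i
    have hvneg : s * v i ≤ 0 := by
      simp only [hv]; nlinarith [hs0.le, (by positivity : (0:ℝ) ≤ (i:ℝ)+1)]
    rw [hdecomp x (s * v i) hvneg]
    rw [← Fin.sum_univ_eq_sum_range (fun j : ℕ => (s * v i) ^ j * p j x) (k+1)]
    simp only [Matrix.mulVec, dotProduct, hM, Matrix.vandermonde, Matrix.of_apply, hpv]
    apply Finset.sum_congr rfl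
    intro b _
    rw [mul_pow]
    ring
  have hsol : pv = M⁻¹.mulVec (fun i => u x (s * v i)) := by
    rw [← hmv, Matrix.mulVec_mulVec, Matrix.nonsing_inv_mul M (Ne.isUnit hMdet), Matrix.one_mulVec]
  have hkey : s ^ j * p j x = ∑ i, M⁻¹ j' i * u x (s * v i) := by
    have := congrFun hsol j'
    simpa [hpv, hj', Matrix.mulVec, dotProduct] using this
  -- bound |s^j * p j x|
  set B : ℝ := |C| * ((k:ℝ)+2) ^ (2*k) * (1 + ‖x‖) ^ (2*k) with hB
  have habs : |s ^ j * p j x| ≤ (∑ i, |M⁻¹ j' i|) * B := by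
    rw [hkey]
    calc |∑ i, M⁻¹ j' i * u x (s * v i)| ≤ ∑ i, |M⁻¹ j' i * u x (s * v i)| :=
          Finset.abs_sum_le_sum_abs _ _
      _ ≤ ∑ i, |M⁻¹ j' i| * B := by
          apply Finset.sum_le_sum
          intro i _
          rw [abs_mul]
          exact mul_le_mul_of_nonneg_left (hub i) (abs_nonneg _)
      _ = (∑ i, |M⁻¹ j' i|) * B := by rw [Finset.sum_mul]
  -- unfold s^j and cancel
  have hsj : s ^ j = (1 + ‖x‖) ^ (2*j) := by rw [hs, ← pow_mul]
  have hsplit : (1 + ‖x‖) ^ (2*k) = (1 + ‖x‖) ^ (2*j) * (1 + ‖x‖) ^ (2*(k-j)) := by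
    rw [← pow_add]
    congr 1
    omega
  have hpos2j : (0:ℝ) < (1 + ‖x‖) ^ (2*j) := by positivity
  set A : ℝ := ∑ i, |M⁻¹ j' i| with hA
  have hA0 : 0 ≤ A := Finset.sum_nonneg fun i _ => abs_nonneg _
  have hmain : |p j x| ≤ A * (|C| * ((k:ℝ)+2) ^ (2*k)) * (1 + ‖x‖) ^ (2*(k-j)) := by
    have h1 : |p j x| * (1 + ‖x‖) ^ (2*j)
        ≤ (A * (|C| * ((k:ℝ)+2) ^ (2*k)) * (1 + ‖x‖) ^ (2*(k-j))) * (1 + ‖x‖) ^ (2*j) := by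
      calc |p j x| * (1 + ‖x‖) ^ (2*j) = |s ^ j * p j x| := by
            rw [abs_mul, abs_of_pos (by positivity : (0:ℝ) < s ^ j), hsj]; ring
        _ ≤ A * B := habs
        _ = (A * (|C| * ((k:ℝ)+2) ^ (2*k)) * (1 + ‖x‖) ^ (2*(k-j))) * (1 + ‖x‖) ^ (2*j) := by
            rw [hB, hsplit]; ring
    exact le_of_mul_le_mul_right h1 hpos2j
  calc |p j x| ≤ A * (|C| * ((k:ℝ)+2) ^ (2*k)) * (1 + ‖x‖) ^ (2*(k-j)) := hmain
    _ ≤ A * (|C| * ((k:ℝ)+2) ^ (2*k)) * (2 ^ (2*(k-j)) * (1 + ‖x‖ ^ (2*(k-j)))) := by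
        apply mul_le_mul_of_nonneg_left (aux_pow _ _ hx0)
        positivity
    _ = A * (|C| * ((k:ℝ)+2) ^ (2*k)) * 2 ^ (2*(k-j)) * (1 + ‖x‖ ^ (2*(k-j))) := by ring
end

section
/- For each positive integer p, the space of parabolically homogeneous caloric polynomials of parabolic degree p in n spatial variables, i.e., the kernel of the heat operator ∂ₜ − Δ acting on 𝒜_pⁿ, has dimension equal to dim A_pⁿ = (p + n − 1)! / (p! (n − 1)!). -/
open MvPolynomial

/-- The parabolic weight on the variables `x₁, …, x_n, t` (with `t` encoded as `none`):
each `xᵢ` has degree `1` and `t` has degree `2`. The parabolically homogeneous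
polynomials `𝒜_pⁿ` of parabolic degree `p` are then
`weightedHomogeneousSubmodule ℝ (parabolicWeight n) p`. -/
def parabolicWeight (n : ℕ) : Option (Fin n) → ℕ := fun o => o.elim 2 fun _ => 1

/-- The heat operator `∂ₜ - Δ` on polynomials in `x₁, …, x_n, t`
(with `t` encoded as `none`). -/
noncomputable def heatOp (n : ℕ) :
    MvPolynomial (Option (Fin n)) ℝ →ₗ[ℝ] MvPolynomial (Option (Fin n)) ℝ :=
  (pderiv (none : Option (Fin n))).toLinearMap -
    ∑ i : Fin n, ((pderiv (some i)).toLinearMap ∘ₗ (pderiv (some i)).toLinearMap)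

/-- The Laplacian `Δ = ∑ᵢ ∂²/∂xᵢ²` on polynomials in `x₁, …, x_n`. -/
noncomputable def lapOp (n : ℕ) : MvPolynomial (Fin n) ℝ →ₗ[ℝ] MvPolynomial (Fin n) ℝ :=
  ∑ i : Fin n, ((pderiv i).toLinearMap ∘ₗ (pderiv i).toLinearMap)

namespace CaloricAux

variable {n : ℕ}

/- ### Basic weight computations -/

lemma weight_mapDomain_some (w : Option (Fin n) → ℕ) (hw : ∀ i, w (some i) = 1)
    (m : Fin n →₀ ℕ) :
    Finsupp.weight w (m.mapDomain some) = Finsupp.weight (1 : Fin n → ℕ) m := by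
  rw [Finsupp.weight_apply, Finsupp.weight_apply]
  rw [Finsupp.sum_mapDomain_index (by simp) (by intros; rw [add_smul])]
  simp [hw]

lemma degree_sub_single {s : Fin n →₀ ℕ} {i : Fin n} (h : s i ≠ 0) :
    Finsupp.weight (1 : Fin n → ℕ) (s - Finsupp.single i 1)
      = Finsupp.weight (1 : Fin n → ℕ) s - 1 := by
  have hle : Finsupp.single i 1 ≤ s := Finsupp.single_le_iff.mpr (Nat.one_le_iff_ne_zero.mpr h)
  have hs : (s - Finsupp.single i 1) + Finsupp.single i 1 = s := tsub_add_cancel_of_le hle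
  have := congrArg (Finsupp.weight (1 : Fin n → ℕ)) hs
  rw [map_add] at this
  have hsingle : Finsupp.weight (1 : Fin n → ℕ) (Finsupp.single i 1) = 1 := by
    rw [Finsupp.weight_apply, Finsupp.sum_single_index] <;> simp
  omega

/- ### Homogeneity and derivatives -/

lemma isHomogeneous_pderiv {u : MvPolynomial (Fin n) ℝ} {d : ℕ} (h : u.IsHomogeneous d)
    (i : Fin n) : (pderiv i u).IsHomogeneous (d - 1) := by
  conv_lhs => rw [as_sum u]
  rw [map_sum]
  apply IsWeightedHomogeneous.sum
  intro s hs
  rw [pderiv_monomial]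
  by_cases h0 : coeff s u * s i = 0
  · rw [h0, monomial_zero]; exact isHomogeneous_zero _ _ _
  · apply isWeightedHomogeneous_monomial
    have hsi : s i ≠ 0 := fun h' => h0 (by simp [h'])
    have hd : Finsupp.weight (1 : Fin n → ℕ) s = d := h (mem_support_iff.mp hs)
    rw [degree_sub_single hsi, hd]

lemma pderiv_eq_zero_of_isHomogeneous_zero {u : MvPolynomial (Fin n) ℝ}
    (h : u.IsHomogeneous 0) (i : Fin n) : pderiv i u = 0 := by
  apply pderiv_eq_zero_of_notMem_vars
  intro hv
  obtain ⟨m, hm, him⟩ := (mem_vars i).mp hv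
  have := (totalDegree_eq_zero_iff _ u).mp (h.totalDegree ?_) m hm i
  · exact (Finsupp.mem_support_iff.mp him) this
  · intro h0
    rw [h0] at hm
    simp at hm

/- ### The Laplacian and homogeneity -/

lemma lapOp_apply (f : MvPolynomial (Fin n) ℝ) :
    lapOp n f = ∑ i : Fin n, pderiv i (pderiv i f) := by
  simp [lapOp]

lemma isHomogeneous_lapOp {u : MvPolynomial (Fin n) ℝ} {d : ℕ} (h : u.IsHomogeneous d) :
    (lapOp n u).IsHomogeneous (d - 2) := by
  rw [lapOp_apply]
  apply IsWeightedHomogeneous.sum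
  intro i _
  have := isHomogeneous_pderiv (isHomogeneous_pderiv h i) i
  rwa [Nat.sub_sub] at this

lemma lapOp_eq_zero_of_lt {u : MvPolynomial (Fin n) ℝ} {d : ℕ} (h : u.IsHomogeneous d)
    (hd : d < 2) : lapOp n u = 0 := by
  rw [lapOp_apply]
  apply Finset.sum_eq_zero
  intro i _
  have h1 : (pderiv i u).IsHomogeneous 0 := by
    have := isHomogeneous_pderiv h i
    rwa [show d - 1 = 0 by omega] at this
  exact pderiv_eq_zero_of_isHomogeneous_zero h1 i

lemma isHomogeneous_lapOp_pow {u : MvPolynomial (Fin n) ℝ} {p : ℕ} (h : u.IsHomogeneous p)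
    (k : ℕ) : (((lapOp n) ^ k) u).IsHomogeneous (p - 2 * k) := by
  induction k with
  | zero => simpa using h
  | succ k ih =>
      rw [pow_succ', Module.End.mul_apply]
      have := isHomogeneous_lapOp ih
      rwa [show p - 2 * k - 2 = p - 2 * (k + 1) by omega] at this

lemma lapOp_pow_eq_zero {u : MvPolynomial (Fin n) ℝ} {p : ℕ} (h : u.IsHomogeneous p)
    {k : ℕ} (hk : p < 2 * k) : ((lapOp n) ^ k) u = 0 := by
  induction k with
  | zero => omega
  | succ k ih =>
      rw [pow_succ', Module.End.mul_apply]
      by_cases h2 : p < 2 * k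
      · rw [ih h2, map_zero]
      · exact lapOp_eq_zero_of_lt (isHomogeneous_lapOp_pow h k) (by omega)

/- ### The heat operator, rename and evaluation at `t = 0` -/

lemma heatOp_apply (f : MvPolynomial (Option (Fin n)) ℝ) :
    heatOp n f = pderiv none f - ∑ i : Fin n, pderiv (some i) (pderiv (some i) f) := by
  simp [heatOp]

lemma pderiv_none_rename (v : MvPolynomial (Fin n) ℝ) :
    pderiv (none : Option (Fin n)) (rename some v) = 0 := by
  classical
  apply pderiv_eq_zero_of_notMem_vars
  intro hv
  obtain ⟨i, _, hi⟩ := mem_vars_rename _ _ hv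
  cases hi

/-- evaluation at t = 0 -/
noncomputable def ev0 (n : ℕ) :
    MvPolynomial (Option (Fin n)) ℝ →ₐ[ℝ] MvPolynomial (Fin n) ℝ :=
  killCompl (Option.some_injective (Fin n))

lemma ev0_rename (v : MvPolynomial (Fin n) ℝ) : ev0 n (rename some v) = v :=
  killCompl_rename_app _ _

lemma ev0_X_none : ev0 n (X none) = 0 := by
  rw [ev0, killCompl, aeval_X, dif_neg]
  rintro ⟨i, hi⟩
  cases hi

lemma isWeightedHomogeneous_rename_some {u : MvPolynomial (Fin n) ℝ} {d : ℕ}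
    (h : u.IsHomogeneous d) :
    IsWeightedHomogeneous (parabolicWeight n) (rename (some : Fin n → Option (Fin n)) u) d := by
  intro m hm
  obtain ⟨s, rfl, hs⟩ := coeff_rename_ne_zero _ _ _ hm
  rw [weight_mapDomain_some _ (fun i => rfl)]
  exact h hs

lemma isWeightedHomogeneous_T_pow (k : ℕ) :
    IsWeightedHomogeneous (parabolicWeight n)
      ((X (none : Option (Fin n)) : MvPolynomial (Option (Fin n)) ℝ) ^ k) (2 * k) := by
  rw [X_pow_eq_monomial]
  apply isWeightedHomogeneous_monomial
  rw [Finsupp.weight_apply, Finsupp.sum_single_index] <;>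
    simp [parabolicWeight, mul_comm]

/- ### The caloric extension operator -/

/-- The caloric extension operator. -/
noncomputable def extOp (n p : ℕ) :
    MvPolynomial (Fin n) ℝ →ₗ[ℝ] MvPolynomial (Option (Fin n)) ℝ :=
  ∑ k ∈ Finset.range (p + 1), ((k.factorial : ℝ))⁻¹ •
    ((LinearMap.mulLeft ℝ ((X (none : Option (Fin n)) : MvPolynomial (Option (Fin n)) ℝ) ^ k)) ∘ₗ
      (rename (some : Fin n → Option (Fin n))).toLinearMap ∘ₗ ((lapOp n) ^ k))

lemma extOp_apply (p : ℕ) (u : MvPolynomial (Fin n) ℝ) :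
    extOp n p u = ∑ k ∈ Finset.range (p + 1), ((k.factorial : ℝ))⁻¹ •
      ((X (none : Option (Fin n)) : MvPolynomial (Option (Fin n)) ℝ) ^ k *
        rename some (((lapOp n) ^ k) u)) := by
  simp [extOp, LinearMap.sum_apply]

lemma fact_inv_succ (k : ℕ) : (((k+1).factorial : ℝ))⁻¹ * (k+1) = ((k.factorial : ℝ))⁻¹ := by
  have h1 : ((k+1 : ℕ) : ℝ) ≠ 0 := Nat.cast_ne_zero.mpr (Nat.succ_ne_zero k)
  have h2 : ((k.factorial : ℝ)) ≠ 0 := Nat.cast_ne_zero.mpr k.factorial_ne_zero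
  rw [Nat.factorial_succ]
  push_cast
  field_simp

lemma ev0_extOp (p : ℕ) (u : MvPolynomial (Fin n) ℝ) : ev0 n (extOp n p u) = u := by
  rw [extOp_apply, map_sum, Finset.sum_range_succ']
  have h0 : ∀ k : ℕ, ev0 n ((((k+1).factorial : ℝ))⁻¹ •
      ((X (none : Option (Fin n)) : MvPolynomial (Option (Fin n)) ℝ) ^ (k+1) *
        rename some (((lapOp n) ^ (k+1)) u))) = 0 := by
    intro k
    rw [map_smul, map_mul, map_pow, ev0_X_none, zero_pow (Nat.succ_ne_zero k), zero_mul,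
      smul_zero]
  rw [Finset.sum_eq_zero (fun k _ => h0 k), zero_add]
  simp [ev0_rename]

lemma pderiv_some_term (i : Fin n) (k : ℕ) (v : MvPolynomial (Fin n) ℝ) :
    pderiv (some i) ((X (none : Option (Fin n)) : MvPolynomial (Option (Fin n)) ℝ) ^ k *
      rename some v) =
    (X (none : Option (Fin n)) : MvPolynomial (Option (Fin n)) ℝ) ^ k *
      rename some (pderiv i v) := by
  rw [pderiv_mul, pderiv_pow, pderiv_X_of_ne (by simp), mul_zero, zero_mul, zero_add,
    pderiv_rename (Option.some_injective _)]

lemma pderiv_none_term (k : ℕ) (v : MvPolynomial (Fin n) ℝ) :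
    pderiv (none : Option (Fin n)) ((X (none : Option (Fin n)) : MvPolynomial (Option (Fin n)) ℝ) ^ k *
      rename some v) =
    (k : ℝ) • ((X (none : Option (Fin n)) : MvPolynomial (Option (Fin n)) ℝ) ^ (k-1) *
      rename some v) := by
  rw [pderiv_mul, pderiv_pow, pderiv_X_self, mul_one, pderiv_none_rename, mul_zero, add_zero,
    MvPolynomial.smul_eq_C_mul, map_natCast, mul_assoc]

lemma heatOp_extOp {p : ℕ} {u : MvPolynomial (Fin n) ℝ} (h : u.IsHomogeneous p) :
    heatOp n (extOp n p u) = 0 := by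
  rw [heatOp_apply, extOp_apply]
  have hA : pderiv (none : Option (Fin n))
      (∑ k ∈ Finset.range (p + 1), ((k.factorial : ℝ))⁻¹ •
        ((X (none : Option (Fin n)) : MvPolynomial (Option (Fin n)) ℝ) ^ k *
          rename some (((lapOp n) ^ k) u))) =
      ∑ k ∈ Finset.range p, ((k.factorial : ℝ))⁻¹ •
        ((X (none : Option (Fin n)) : MvPolynomial (Option (Fin n)) ℝ) ^ k *
          rename some (((lapOp n) ^ (k+1)) u)) := by
    rw [map_sum, Finset.sum_range_succ']
    simp only [Derivation.map_smul, pderiv_none_term]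
    rw [Nat.cast_zero, zero_smul, smul_zero, add_zero]
    apply Finset.sum_congr rfl
    intro k _
    rw [smul_smul, Nat.add_sub_cancel]
    push_cast
    rw [fact_inv_succ k]
  have hB : ∑ i : Fin n, pderiv (some i) (pderiv (some i)
      (∑ k ∈ Finset.range (p + 1), ((k.factorial : ℝ))⁻¹ •
        ((X (none : Option (Fin n)) : MvPolynomial (Option (Fin n)) ℝ) ^ k *
          rename some (((lapOp n) ^ k) u)))) =
      ∑ k ∈ Finset.range p, ((k.factorial : ℝ))⁻¹ •
        ((X (none : Option (Fin n)) : MvPolynomial (Option (Fin n)) ℝ) ^ k *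
          rename some (((lapOp n) ^ (k+1)) u)) := by
    have hterm : ∀ k ∈ Finset.range (p+1), ∑ i : Fin n, pderiv (some i) (pderiv (some i)
        (((k.factorial : ℝ))⁻¹ •
          ((X (none : Option (Fin n)) : MvPolynomial (Option (Fin n)) ℝ) ^ k *
            rename some (((lapOp n) ^ k) u)))) =
        ((k.factorial : ℝ))⁻¹ •
          ((X (none : Option (Fin n)) : MvPolynomial (Option (Fin n)) ℝ) ^ k *
            rename some (((lapOp n) ^ (k+1)) u)) := by
      intro k _
      simp only [Derivation.map_smul, pderiv_some_term]
      rw [← Finset.smul_sum, ← Finset.mul_sum, ← map_sum, ← lapOp_apply, ← Module.End.mul_apply,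
        ← pow_succ']
    calc ∑ i : Fin n, pderiv (some i) (pderiv (some i) _)
        = ∑ k ∈ Finset.range (p+1), ∑ i : Fin n, pderiv (some i) (pderiv (some i)
          (((k.factorial : ℝ))⁻¹ •
            ((X (none : Option (Fin n)) : MvPolynomial (Option (Fin n)) ℝ) ^ k *
              rename some (((lapOp n) ^ k) u)))) := by
          rw [Finset.sum_comm]
          apply Finset.sum_congr rfl
          intro i _
          rw [← map_sum, ← map_sum]
      _ = _ := by
          rw [Finset.sum_congr rfl hterm, Finset.sum_range_succ,
            lapOp_pow_eq_zero h (by omega), map_zero, mul_zero, smul_zero, add_zero]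
  rw [hA, hB, sub_self]

lemma extOp_mem_weighted {p : ℕ} {u : MvPolynomial (Fin n) ℝ} (h : u.IsHomogeneous p) :
    extOp n p u ∈ weightedHomogeneousSubmodule ℝ (parabolicWeight n) p := by
  rw [extOp_apply]
  apply Submodule.sum_mem
  intro k _
  apply Submodule.smul_mem
  by_cases hk : 2 * k ≤ p
  · rw [mem_weightedHomogeneousSubmodule]
    have := (isWeightedHomogeneous_T_pow (n := n) k).mul
      (isWeightedHomogeneous_rename_some (isHomogeneous_lapOp_pow h k))
    rwa [show 2 * k + (p - 2 * k) = p by omega] at this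
  · rw [lapOp_pow_eq_zero h (by omega), map_zero, mul_zero]
    exact Submodule.zero_mem _

/- ### Uniqueness: a caloric polynomial vanishing at `t = 0` is zero -/

lemma oEL_pderiv_none (f : MvPolynomial (Option (Fin n)) ℝ) :
    optionEquivLeft ℝ (Fin n) (pderiv none f) =
      Polynomial.derivative (optionEquivLeft ℝ (Fin n) f) := by
  induction f using MvPolynomial.induction_on with
  | C a => rw [pderiv_C, map_zero, optionEquivLeft_C, Polynomial.derivative_C]
  | add f g hf hg => simp only [map_add, hf, hg]
  | mul_X q j ih =>
      cases j with
      | none =>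
          rw [pderiv_mul, pderiv_X_self, mul_one, map_add, map_mul, optionEquivLeft_X_none,
            ih, map_mul, optionEquivLeft_X_none, Polynomial.derivative_mul,
            Polynomial.derivative_X, mul_one]
      | some i =>
          rw [pderiv_mul, pderiv_X_of_ne (Option.some_ne_none i), mul_zero, add_zero,
            map_mul, optionEquivLeft_X_some, ih, map_mul, optionEquivLeft_X_some,
            Polynomial.derivative_mul, Polynomial.derivative_C, mul_zero, add_zero]

lemma oEL_coeff_pderiv_some (i : Fin n) (f : MvPolynomial (Option (Fin n)) ℝ) (k : ℕ) :
    (optionEquivLeft ℝ (Fin n) (pderiv (some i) f)).coeff k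
      = pderiv i ((optionEquivLeft ℝ (Fin n) f).coeff k) := by
  induction f using MvPolynomial.induction_on generalizing k with
  | C a =>
      rw [pderiv_C, map_zero, Polynomial.coeff_zero, optionEquivLeft_C, Polynomial.coeff_C]
      split <;> simp
  | add f g hf hg =>
      simp only [map_add, Polynomial.coeff_add, hf, hg]
  | mul_X q j ih =>
      cases j with
      | none =>
          rw [pderiv_mul, pderiv_X_of_ne (Option.some_ne_none i).symm, mul_zero, add_zero,
            map_mul, optionEquivLeft_X_none, map_mul, optionEquivLeft_X_none]
          cases k with
          | zero => rw [Polynomial.coeff_mul_X_zero, Polynomial.coeff_mul_X_zero, map_zero]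
          | succ k => rw [Polynomial.coeff_mul_X, Polynomial.coeff_mul_X, ih]
      | some i' =>
          by_cases hii : i' = i
          · subst hii
            rw [pderiv_mul, pderiv_X_self, mul_one, map_add, map_mul, optionEquivLeft_X_some,
              Polynomial.coeff_add, Polynomial.coeff_mul_C, ih,
              map_mul, optionEquivLeft_X_some, Polynomial.coeff_mul_C, pderiv_mul,
              pderiv_X_self, mul_one]
          · rw [pderiv_mul, pderiv_X_of_ne (fun h => hii (Option.some_injective _ h)), mul_zero,
              add_zero, map_mul, optionEquivLeft_X_some, Polynomial.coeff_mul_C, ih,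
              map_mul, optionEquivLeft_X_some, Polynomial.coeff_mul_C, pderiv_mul,
              pderiv_X_of_ne hii, mul_zero, add_zero]

lemma oEL_coeff_zero (f : MvPolynomial (Option (Fin n)) ℝ) :
    (optionEquivLeft ℝ (Fin n) f).coeff 0 = ev0 n f := by
  induction f using MvPolynomial.induction_on with
  | C a => rw [optionEquivLeft_C, Polynomial.coeff_C_zero]; simp [ev0]
  | add f g hf hg => rw [map_add, Polynomial.coeff_add, hf, hg, map_add]
  | mul_X q j ih =>
      rw [map_mul, map_mul, Polynomial.mul_coeff_zero, ih]
      cases j with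
      | none =>
          rw [optionEquivLeft_X_none, Polynomial.coeff_X_zero, mul_zero]
          have : ev0 n (X (none : Option (Fin n))) = 0 := ev0_X_none
          rw [this, mul_zero]
      | some i =>
          rw [optionEquivLeft_X_some, Polynomial.coeff_C_zero]
          have : ev0 n (X (some i)) = X i := by
            rw [ev0, killCompl, aeval_X, dif_pos ⟨i, rfl⟩, Equiv.ofInjective_symm_apply]
          rw [this]

lemma eq_zero_of_caloric_of_ev0 {f : MvPolynomial (Option (Fin n)) ℝ}
    (hc : heatOp n f = 0) (h0 : ev0 n f = 0) : f = 0 := by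
  have key : ∀ k, (optionEquivLeft ℝ (Fin n) f).coeff k = 0 := by
    have heq : pderiv none f = ∑ i : Fin n, pderiv (some i) (pderiv (some i) f) := by
      have := heatOp_apply f
      rw [hc] at this
      linear_combination -this
    intro k
    induction k with
    | zero => rw [oEL_coeff_zero, h0]
    | succ k ih =>
        have hco := congrArg (fun P => Polynomial.coeff P k)
          (congrArg (optionEquivLeft ℝ (Fin n)) heq)
        simp only [oEL_pderiv_none, Polynomial.coeff_derivative, map_sum] at hco
        have hrhs : (∑ i : Fin n,
            (optionEquivLeft ℝ (Fin n)) (pderiv (some i) (pderiv (some i) f))).coeff k = 0 := by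
          rw [Polynomial.finset_sum_coeff]
          apply Finset.sum_eq_zero
          intro i _
          rw [oEL_coeff_pderiv_some, oEL_coeff_pderiv_some, ih, map_zero, map_zero]
        rw [hrhs] at hco
        have hne : ((k : MvPolynomial (Fin n) ℝ) + 1) ≠ 0 := by
          have : ((k + 1 : ℕ) : MvPolynomial (Fin n) ℝ) ≠ 0 := Nat.cast_ne_zero.mpr (by omega)
          push_cast at this
          exact this
        rcases mul_eq_zero.mp hco with h | h
        · exact h
        · exact absurd h hne
  have h1 : optionEquivLeft ℝ (Fin n) f = 0 := Polynomial.ext fun k => key k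
  have h2 := congrArg (optionEquivLeft ℝ (Fin n)).symm h1
  rwa [AlgEquiv.symm_apply_apply, map_zero] at h2

/- ### Evaluation at `t = 0` preserves homogeneity -/

lemma coeff_ev0 (f : MvPolynomial (Option (Fin n)) ℝ) (m : Fin n →₀ ℕ) :
    coeff m (ev0 n f) = coeff (m.mapDomain some) f := by
  induction f using MvPolynomial.induction_on' with
  | add f g hf hg => rw [map_add, coeff_add, coeff_add, hf, hg]
  | monomial s c =>
      by_cases hs : s none = 0
      · set t : Fin n →₀ ℕ :=
          Finsupp.comapDomain some s ((Option.some_injective (Fin n)).injOn) with ht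
        have hts : Finsupp.mapDomain some t = s := by
          ext o
          cases o with
          | none =>
              rw [Finsupp.mapDomain_notin_range _ _ (by rintro ⟨i, hi⟩; cases hi),
                hs]
          | some i =>
              rw [Finsupp.mapDomain_apply (Option.some_injective _), ht,
                Finsupp.comapDomain_apply]
        have : (monomial s c : MvPolynomial (Option (Fin n)) ℝ) = rename some (monomial t c) := by
          rw [rename_monomial, hts]
        rw [this, show ev0 n ((rename some) ((monomial t) c)) = monomial t c from
            killCompl_rename_app _ _,
          coeff_rename_mapDomain some (Option.some_injective _)]
      · have hrhs : coeff (m.mapDomain some) (monomial s c) = 0 := by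
          rw [coeff_monomial, if_neg]
          intro h
          apply hs
          rw [h, Finsupp.mapDomain_notin_range]
          rintro ⟨i, hi⟩
          cases hi
        rw [hrhs]
        have hz : ev0 n (monomial s c) = 0 := by
          rw [monomial_eq, map_mul]
          have : ev0 n (s.prod fun o e => (X o : MvPolynomial (Option (Fin n)) ℝ) ^ e) = 0 := by
            rw [Finsupp.prod, map_prod]
            apply Finset.prod_eq_zero (Finsupp.mem_support_iff.mpr hs)
            rw [map_pow, ev0_X_none, zero_pow hs]
          rw [this, mul_zero]
        rw [hz, coeff_zero]

lemma ev0_mem_homog {p : ℕ} {f : MvPolynomial (Option (Fin n)) ℝ}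
    (hf : f ∈ weightedHomogeneousSubmodule ℝ (parabolicWeight n) p) :
    ev0 n f ∈ homogeneousSubmodule (Fin n) ℝ p := by
  rw [mem_homogeneousSubmodule]
  intro m hm
  rw [coeff_ev0] at hm
  have h2 := hf hm
  rwa [weight_mapDomain_some _ (fun i => rfl)] at h2

end CaloricAux

/-- Lemma 3.1 of the paper (first claim): for each positive integer `p`, the space of
parabolically homogeneous caloric polynomials of parabolic degree `p` in `n` spatial
variables, i.e. the kernel of the heat operator `∂ₜ - Δ` on `𝒜_pⁿ`, has dimension equal
to `dim A_pⁿ`, the dimension of the homogeneous polynomials of degree `p` in `n`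
variables (which is `(p+n-1)!/(p!(n-1)!)`). -/
theorem dim_homogeneous_caloric (n p : ℕ) (hp : 0 < p) :
    Module.finrank ℝ
      ↥(weightedHomogeneousSubmodule ℝ (parabolicWeight n) p ⊓ LinearMap.ker (heatOp n)) =
    Module.finrank ℝ ↥(homogeneousSubmodule (Fin n) ℝ p) := by
  classical
  set K := weightedHomogeneousSubmodule ℝ (parabolicWeight n) p ⊓ LinearMap.ker (heatOp n) with hK
  have hmem : ∀ u : homogeneousSubmodule (Fin n) ℝ p,
      CaloricAux.extOp n p u.1 ∈ K := fun u =>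
    ⟨CaloricAux.extOp_mem_weighted u.2,
      LinearMap.mem_ker.mpr (CaloricAux.heatOp_extOp u.2)⟩
  let Φ : homogeneousSubmodule (Fin n) ℝ p →ₗ[ℝ] K :=
    LinearMap.codRestrict K ((CaloricAux.extOp n p).comp (Submodule.subtype _))
      (fun u => hmem u)
  have hinj : Function.Injective Φ := by
    intro u v huv
    apply Subtype.ext
    have h1 : CaloricAux.extOp n p u.1 = CaloricAux.extOp n p v.1 :=
      congrArg Subtype.val huv
    have h2 := congrArg (CaloricAux.ev0 n) h1
    rwa [CaloricAux.ev0_extOp, CaloricAux.ev0_extOp] at h2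
  have hsurj : Function.Surjective Φ := by
    rintro ⟨f, hf1, hf2⟩
    have hu : CaloricAux.ev0 n f ∈ homogeneousSubmodule (Fin n) ℝ p :=
      CaloricAux.ev0_mem_homog hf1
    refine ⟨⟨CaloricAux.ev0 n f, hu⟩, ?_⟩
    apply Subtype.ext
    show CaloricAux.extOp n p (CaloricAux.ev0 n f) = f
    have hker : heatOp n (CaloricAux.extOp n p (CaloricAux.ev0 n f) - f) = 0 := by
      rw [map_sub, CaloricAux.heatOp_extOp hu, LinearMap.mem_ker.mp hf2, sub_zero]
    have h0 : CaloricAux.ev0 n (CaloricAux.extOp n p (CaloricAux.ev0 n f) - f) = 0 := by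
      rw [map_sub, CaloricAux.ev0_extOp, sub_self]
    exact sub_eq_zero.mp (CaloricAux.eq_zero_of_caloric_of_ev0 hker h0)
  exact (LinearEquiv.ofBijective Φ ⟨hinj, hsurj⟩).symm.finrank_eq
end

section
/- For each integer p ≥ 2, the linear map ∂ₜ − Δ from 𝒜_pⁿ to 𝒜_{p−2}ⁿ is surjective. -/
open MvPolynomial

/-! ### Auxiliary machinery -/

/-- The Laplacian in the `x`-variables acting on polynomials in `x₁, …, x_n, t`. -/
noncomputable def lapT (n : ℕ) :
    MvPolynomial (Option (Fin n)) ℝ →ₗ[ℝ] MvPolynomial (Option (Fin n)) ℝ :=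
  ∑ i : Fin n, ((pderiv (some i)).toLinearMap ∘ₗ (pderiv (some i)).toLinearMap)

/-- Formal integration in the variable `t` (encoded as `none`), with zero constant term. -/
noncomputable def tInt (n : ℕ) :
    MvPolynomial (Option (Fin n)) ℝ →ₗ[ℝ] MvPolynomial (Option (Fin n)) ℝ :=
  (Finsupp.lsum ℝ fun d : Option (Fin n) →₀ ℕ =>
    (((d none : ℝ) + 1)⁻¹) • (monomial (d + Finsupp.single none 1) : ℝ →ₗ[ℝ] _))
  ∘ₗ (AddMonoidAlgebra.coeffLinearEquiv ℝ).toLinearMap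

theorem tInt_monomial {n : ℕ} (d : Option (Fin n) →₀ ℕ) (c : ℝ) :
    tInt n (monomial d c) =
      monomial (d + Finsupp.single none 1) (((d none : ℝ) + 1)⁻¹ * c) := by
  rw [tInt, ← single_eq_monomial, LinearMap.comp_apply]
  erw [show (AddMonoidAlgebra.coeffLinearEquiv ℝ).toLinearMap (AddMonoidAlgebra.single d c) =
    Finsupp.single d c from rfl, Finsupp.lsum_single]
  rw [LinearMap.smul_apply, smul_monomial]
  rfl

theorem exists_monomial_ne_zero {n : ℕ}
    (T : MvPolynomial (Option (Fin n)) ℝ →ₗ[ℝ] MvPolynomial (Option (Fin n)) ℝ)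
    {f : MvPolynomial (Option (Fin n)) ℝ} {e : Option (Fin n) →₀ ℕ}
    (h : coeff e (T f) ≠ 0) :
    ∃ d ∈ f.support, coeff e (T (monomial d (coeff d f))) ≠ 0 := by
  have hf : T f = ∑ d ∈ f.support, T (monomial d (coeff d f)) := by
    conv_lhs => rw [← support_sum_monomial_coeff f]
    rw [map_sum]
  rw [hf, coeff_sum] at h
  exact Finset.exists_ne_zero_of_sum_ne_zero h

theorem weight_single_one {n : ℕ} (w : Option (Fin n) → ℕ) (j : Option (Fin n)) :
    Finsupp.weight w (Finsupp.single j 1) = w j := by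
  rw [Finsupp.weight_apply, Finsupp.sum_single_index] <;> simp

/-- `pderiv` lowers weighted degree by the weight of the variable. -/
theorem isWeightedHomogeneous_pderiv {n : ℕ} {w : Option (Fin n) → ℕ} {m : ℕ}
    {j : Option (Fin n)} {f : MvPolynomial (Option (Fin n)) ℝ}
    (hf : IsWeightedHomogeneous w f (m + w j)) :
    IsWeightedHomogeneous w (pderiv j f) m := by
  intro e he
  obtain ⟨d, hd, hne⟩ := exists_monomial_ne_zero (pderiv j).toLinearMap he
  simp only [Derivation.coeFn_coe, pderiv_monomial, coeff_monomial] at hne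
  split_ifs at hne with hE
  · have hdj : d j ≠ 0 := by
      intro h0
      simp [h0] at hne
    have hcd : coeff d f ≠ 0 := fun h0 => hne (by simp [h0])
    have hle : Finsupp.single j 1 ≤ d := by
      rw [Finsupp.single_le_iff]
      omega
    have hde : d = e + Finsupp.single j 1 := by
      rw [← hE, tsub_add_cancel_of_le hle]
    have hw := hf hcd
    rw [hde, map_add, weight_single_one] at hw
    omega
  · exact absurd rfl hne

theorem isWeightedHomogeneous_tInt {n : ℕ} {w : Option (Fin n) → ℕ} {m : ℕ}
    {f : MvPolynomial (Option (Fin n)) ℝ}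
    (hf : IsWeightedHomogeneous w f m) :
    IsWeightedHomogeneous w (tInt n f) (m + w none) := by
  intro e he
  obtain ⟨d, hd, hne⟩ := exists_monomial_ne_zero (tInt n) he
  rw [tInt_monomial, coeff_monomial] at hne
  split_ifs at hne with hE
  · have hcd : coeff d f ≠ 0 := fun h0 => hne (by simp [h0])
    have hw := hf hcd
    rw [← hE, map_add, weight_single_one, hw]
  · exact absurd rfl hne

theorem isWeightedHomogeneous_lapT {n : ℕ} {m : ℕ}
    {f : MvPolynomial (Option (Fin n)) ℝ}
    (hf : IsWeightedHomogeneous (parabolicWeight n) f (m + 2)) :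
    IsWeightedHomogeneous (parabolicWeight n) (lapT n f) m := by
  rw [← mem_weightedHomogeneousSubmodule]
  rw [lapT, LinearMap.sum_apply]
  refine Submodule.sum_mem _ fun i _ => ?_
  rw [mem_weightedHomogeneousSubmodule, LinearMap.comp_apply]
  have h1 : IsWeightedHomogeneous (parabolicWeight n) (pderiv (some i) f) (m + 1) := by
    apply isWeightedHomogeneous_pderiv (j := some i)
    have : m + 1 + parabolicWeight n (some i) = m + 2 := rfl
    rw [this]
    exact hf
  apply isWeightedHomogeneous_pderiv (j := some i)
  exact h1

theorem isWeightedHomogeneous_lapT_pow {n : ℕ} (k : ℕ) {m : ℕ}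
    {f : MvPolynomial (Option (Fin n)) ℝ}
    (hf : IsWeightedHomogeneous (parabolicWeight n) f (m + 2 * k)) :
    IsWeightedHomogeneous (parabolicWeight n) ((lapT n ^ k) f) m := by
  induction k generalizing f with
  | zero => simpa using hf
  | succ k ih =>
    rw [pow_succ, Module.End.mul_apply]
    apply ih
    apply isWeightedHomogeneous_lapT
    have : m + 2 * k + 2 = m + 2 * (k + 1) := by ring
    rw [this]
    exact hf

theorem isWeightedHomogeneous_tInt_pow {n : ℕ} (k : ℕ) {m : ℕ}
    {f : MvPolynomial (Option (Fin n)) ℝ}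
    (hf : IsWeightedHomogeneous (parabolicWeight n) f m) :
    IsWeightedHomogeneous (parabolicWeight n) ((tInt n ^ k) f) (m + 2 * k) := by
  induction k generalizing m with
  | zero => simpa using hf
  | succ k ih =>
    rw [pow_succ', Module.End.mul_apply]
    have h1 := ih hf
    have h2 := isWeightedHomogeneous_tInt (w := parabolicWeight n) h1
    have : m + 2 * k + parabolicWeight n none = m + 2 * (k + 1) := by
      simp only [parabolicWeight, Option.elim]
      ring
    rwa [this] at h2

/-- Every monomial of `f` has `t`-exponent at least `k`. -/
def lowT {n : ℕ} (k : ℕ) (f : MvPolynomial (Option (Fin n)) ℝ) : Prop :=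
  ∀ d, coeff d f ≠ 0 → k ≤ d none

theorem lowT_pderiv_some {n : ℕ} {k : ℕ} (i : Fin n)
    {f : MvPolynomial (Option (Fin n)) ℝ} (hf : lowT k f) :
    lowT k (pderiv (some i) f) := by
  intro e he
  obtain ⟨d, hd, hne⟩ := exists_monomial_ne_zero (pderiv (some i)).toLinearMap he
  simp only [Derivation.coeFn_coe, pderiv_monomial, coeff_monomial] at hne
  split_ifs at hne with hE
  · have hcd : coeff d f ≠ 0 := fun h0 => hne (by simp [h0])
    have : e none = d none := by
      rw [← hE, Finsupp.tsub_apply, Finsupp.single_apply]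
      simp
    rw [this]
    exact hf d hcd
  · exact absurd rfl hne

theorem lowT_lapT {n : ℕ} {k : ℕ} {f : MvPolynomial (Option (Fin n)) ℝ}
    (hf : lowT k f) : lowT k (lapT n f) := by
  intro e he
  rw [lapT, LinearMap.sum_apply, coeff_sum] at he
  obtain ⟨i, _, hne⟩ := Finset.exists_ne_zero_of_sum_ne_zero he
  rw [LinearMap.comp_apply] at hne
  exact lowT_pderiv_some i (lowT_pderiv_some i hf) e hne

theorem lowT_tInt {n : ℕ} {k : ℕ} {f : MvPolynomial (Option (Fin n)) ℝ}
    (hf : lowT k f) : lowT (k + 1) (tInt n f) := by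
  intro e he
  obtain ⟨d, hd, hne⟩ := exists_monomial_ne_zero (tInt n) he
  rw [tInt_monomial, coeff_monomial] at hne
  split_ifs at hne with hE
  · have hcd : coeff d f ≠ 0 := fun h0 => hne (by simp [h0])
    have : e none = d none + 1 := by
      rw [← hE, Finsupp.add_apply, Finsupp.single_apply]
      simp
    rw [this]
    exact Nat.add_le_add_right (hf d hcd) 1
  · exact absurd rfl hne

theorem lowT_lapT_pow {n : ℕ} (j : ℕ) {k : ℕ} {f : MvPolynomial (Option (Fin n)) ℝ}
    (hf : lowT k f) : lowT k ((lapT n ^ j) f) := by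
  induction j generalizing f with
  | zero => simpa using hf
  | succ j ih =>
    rw [pow_succ, Module.End.mul_apply]
    exact ih (lowT_lapT hf)

theorem lowT_tInt_pow {n : ℕ} (j : ℕ) {f : MvPolynomial (Option (Fin n)) ℝ}
    (hf : lowT 0 f) : lowT j ((tInt n ^ j) f) := by
  induction j with
  | zero => simpa using hf
  | succ j ih =>
    rw [pow_succ', Module.End.mul_apply]
    exact lowT_tInt ih

theorem eq_zero_of_lowT {n : ℕ} {m k : ℕ} {f : MvPolynomial (Option (Fin n)) ℝ}
    (hhom : IsWeightedHomogeneous (parabolicWeight n) f m)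
    (hlow : lowT k f) (hmk : m < k) : f = 0 := by
  ext d
  rw [coeff_zero]
  by_contra hne
  have h1 := hhom hne
  have h2 := hlow d hne
  have h3 : d none ≤ Finsupp.weight (parabolicWeight n) d :=
    Finsupp.le_weight (parabolicWeight n) (by simp [parabolicWeight]) d
  omega

theorem pderiv_comm' {n : ℕ} (i j : Option (Fin n))
    (f : MvPolynomial (Option (Fin n)) ℝ) :
    pderiv i (pderiv j f) = pderiv j (pderiv i f) := by
  induction f using MvPolynomial.induction_on' with
  | add f g hf hg => simp [map_add, hf, hg]
  | monomial d c =>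
    rcases eq_or_ne i j with rfl | hij
    · rfl
    · simp only [pderiv_monomial]
      have hA : d - Finsupp.single j 1 - Finsupp.single i 1 =
          d - Finsupp.single i 1 - Finsupp.single j 1 := tsub_right_comm
      have h1 : (d - Finsupp.single j 1 : Option (Fin n) →₀ ℕ) i = d i := by
        rw [Finsupp.tsub_apply, Finsupp.single_apply, if_neg (Ne.symm hij)]
        simp
      have h2 : (d - Finsupp.single i 1 : Option (Fin n) →₀ ℕ) j = d j := by
        rw [Finsupp.tsub_apply, Finsupp.single_apply, if_neg hij]
        simp
      rw [hA, h1, h2]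
      congr 1
      ring

theorem pderiv_none_tInt {n : ℕ} (f : MvPolynomial (Option (Fin n)) ℝ) :
    pderiv none (tInt n f) = f := by
  induction f using MvPolynomial.induction_on' with
  | add f g hf hg => simp [map_add, hf, hg]
  | monomial d c =>
    rw [tInt_monomial, pderiv_monomial]
    have hA : d + Finsupp.single (none : Option (Fin n)) 1 - Finsupp.single none 1 = d := by
      ext x
      simp [Finsupp.tsub_apply, Finsupp.add_apply, Finsupp.single_apply]
    have hB : (d + Finsupp.single (none : Option (Fin n)) 1 : Option (Fin n) →₀ ℕ) none
        = d none + 1 := by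
      rw [Finsupp.add_apply, Finsupp.single_apply]
      simp
    rw [hA, hB]
    have hne : (d none : ℝ) + 1 ≠ 0 := by positivity
    rw [show ((d none + 1 : ℕ) : ℝ) = (d none : ℝ) + 1 by push_cast; ring]
    congr 1
    field_simp

theorem pderiv_none_lapT {n : ℕ} (f : MvPolynomial (Option (Fin n)) ℝ) :
    pderiv none (lapT n f) = lapT n (pderiv none f) := by
  rw [lapT, LinearMap.sum_apply, LinearMap.sum_apply, map_sum]
  refine Finset.sum_congr rfl fun i _ => ?_
  simp only [LinearMap.comp_apply, Derivation.coeFn_coe]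
  rw [pderiv_comm' none (some i), pderiv_comm' none (some i)]

theorem pderiv_none_lapT_pow {n : ℕ} (k : ℕ) (f : MvPolynomial (Option (Fin n)) ℝ) :
    pderiv none ((lapT n ^ k) f) = (lapT n ^ k) (pderiv none f) := by
  induction k generalizing f with
  | zero => simp
  | succ k ih =>
    rw [pow_succ, Module.End.mul_apply, Module.End.mul_apply, ih, pderiv_none_lapT]

/-- From the proof of Lemma 3.1: for each integer `p ≥ 2`, the heat operator
`∂ₜ - Δ : 𝒜_pⁿ → 𝒜_{p-2}ⁿ` is surjective. -/
theorem heatOp_surjective (n p : ℕ) (hp : 2 ≤ p) :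
    ∀ q ∈ weightedHomogeneousSubmodule ℝ (parabolicWeight n) (p - 2),
      ∃ u ∈ weightedHomogeneousSubmodule ℝ (parabolicWeight n) p, heatOp n u = q := by
  intro q hq
  rw [mem_weightedHomogeneousSubmodule] at hq
  refine ⟨∑ k ∈ Finset.range (p + 1), (lapT n ^ k) ((tInt n ^ (k + 1)) q), ?_, ?_⟩
  · refine Submodule.sum_mem _ fun k _ => ?_
    rw [mem_weightedHomogeneousSubmodule]
    apply isWeightedHomogeneous_lapT_pow k
    have h1 := isWeightedHomogeneous_tInt_pow (k + 1) hq
    have h2 : p - 2 + 2 * (k + 1) = p + 2 * k := by omega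
    rwa [h2] at h1
  · set g : ℕ → MvPolynomial (Option (Fin n)) ℝ :=
      fun k => (lapT n ^ k) ((tInt n ^ k) q) with hg
    have hgk : ∀ k, g k = (lapT n ^ k) ((tInt n ^ k) q) := fun _ => rfl
    have hId : heatOp n = (pderiv (none : Option (Fin n))).toLinearMap - lapT n := rfl
    rw [hId, LinearMap.sub_apply, map_sum, map_sum]
    have h1 : ∀ k, (pderiv (none : Option (Fin n))).toLinearMap
        ((lapT n ^ k) ((tInt n ^ (k + 1)) q)) = g k := by
      intro k
      rw [Derivation.coeFn_coe, pderiv_none_lapT_pow, hgk]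
      congr 1
      rw [pow_succ', Module.End.mul_apply, pderiv_none_tInt]
    have h2' : ∀ (k : ℕ) (x : MvPolynomial (Option (Fin n)) ℝ),
        lapT n ((lapT n ^ k) x) = (lapT n ^ (k + 1)) x := fun k x => by
      rw [pow_succ', Module.End.mul_apply]
    have h2 : ∀ k, lapT n ((lapT n ^ k) ((tInt n ^ (k + 1)) q)) = g (k + 1) := fun k =>
      (h2' k _).trans (hgk (k + 1)).symm
    rw [Finset.sum_congr rfl fun k _ => h1 k, Finset.sum_congr rfl fun k _ => h2 k,
      ← Finset.sum_sub_distrib, Finset.sum_range_sub' g (p + 1)]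
    have hg0 : g 0 = q := by simp [hgk]
    have hgp : g (p + 1) = 0 := by
      apply eq_zero_of_lowT (m := p - 2) (k := p + 1)
      · rw [hgk]
        apply isWeightedHomogeneous_lapT_pow (p + 1)
        exact isWeightedHomogeneous_tInt_pow (p + 1) hq
      · rw [hgk]
        exact lowT_lapT_pow (p + 1) (lowT_tInt_pow (p + 1) fun d _ => Nat.zero_le _)
      · omega
    rw [hg0, hgp, sub_zero]
end

section
/- For every nonnegative integer d and every n ≥ 1, the Laplacian Δ = Σᵢ ∂²/∂xᵢ², viewed as a linear map from the space A_{d+2}ⁿ of homogeneous polynomials of degree d + 2 in n variables to the space A_dⁿ of homogeneous polynomials of degree d, is surjective. -/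
open MvPolynomial

private lemma lapOp_apply (n : ℕ) (p : MvPolynomial (Fin n) ℝ) :
    lapOp n p = ∑ i : Fin n, pderiv i (pderiv i p) := by
  simp [lapOp]

private lemma degree_add_single {n : ℕ} (α : Fin n →₀ ℕ) (i : Fin n) (k : ℕ) :
    (α + Finsupp.single i k).degree = α.degree + k := by
  simp [Finsupp.degree_eq_weight_one, map_add, Finsupp.weight_apply,
    Finsupp.sum_single_index]

private lemma pderiv_sq_monomial {n : ℕ} (i : Fin n) (β : Fin n →₀ ℕ) (co : ℝ) :
    pderiv i (pderiv i (monomial β co)) =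
      monomial (β - Finsupp.single i 1 - Finsupp.single i 1)
        (co * ((β i : ℕ) : ℝ) * ((β i - 1 : ℕ) : ℝ)) := by
  have h : ((β - Finsupp.single i 1 : Fin n →₀ ℕ) i) = β i - 1 := by
    simp
  simp [pderiv_monomial, h, mul_assoc]

private lemma add_apply_le_degree {n : ℕ} (α : Fin n →₀ ℕ) {i j : Fin n} (h : i ≠ j) :
    α i + α j ≤ α.degree := by
  classical
  have h1 : ∑ k ∈ ({i, j} : Finset (Fin n)), α k = α i + α j := Finset.sum_pair h
  rw [← h1, Finsupp.degree]
  refine Finset.sum_le_sum_of_ne_zero ?_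
  intro x _ hx
  exact Finsupp.mem_support_iff.mpr hx

private lemma lap_aux (n d : ℕ) (i₀ : Fin n) :
    ∀ m : ℕ, ∀ q : MvPolynomial (Fin n) ℝ, q.IsHomogeneous d →
      (∀ α ∈ q.support, d ≤ α i₀ + m) →
      ∃ u, u.IsHomogeneous (d + 2) ∧ lapOp n u = q := by
  intro m
  induction m using Nat.strong_induction_on with
  | _ m ih =>
    intro q hq hsup
    classical
    -- degrees of monomials of q
    have hdeg : ∀ α ∈ q.support, α.degree = d := by
      intro α hα
      rw [Finsupp.degree_eq_weight_one]
      exact hq (MvPolynomial.mem_support_iff.mp hα)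
    set c : (Fin n →₀ ℕ) → ℝ :=
      fun α => q.coeff α / (((α i₀ : ℝ) + 2) * ((α i₀ : ℝ) + 1)) with hc
    set u₀ : MvPolynomial (Fin n) ℝ :=
      ∑ α ∈ q.support, monomial (α + Finsupp.single i₀ 2) (c α) with hu₀
    -- u₀ is homogeneous of degree d + 2
    have hu₀hom : u₀.IsHomogeneous (d + 2) := by
      apply MvPolynomial.IsHomogeneous.sum
      intro α hα
      exact isHomogeneous_monomial _ (by rw [degree_add_single, hdeg α hα])
    -- ∂ᵢ₀² of each monomial of u₀ recovers the corresponding monomial of q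
    have hmono : ∀ α ∈ q.support,
        pderiv i₀ (pderiv i₀ (monomial (α + Finsupp.single i₀ 2) (c α)))
          = monomial α (q.coeff α) := by
      intro α hα
      rw [pderiv_sq_monomial]
      have e1 : α + Finsupp.single i₀ 2 - Finsupp.single i₀ 1 - Finsupp.single i₀ 1 = α := by
        ext a
        simp only [Finsupp.tsub_apply, Finsupp.add_apply, Finsupp.single_apply]
        split_ifs <;> omega
      have ev : ((α + Finsupp.single i₀ 2 : Fin n →₀ ℕ) i₀) = α i₀ + 2 := by
        simp
      rw [e1, ev, hc]
      congr 1
      rw [show α i₀ + 2 - 1 = α i₀ + 1 from rfl]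
      have hX : ((α i₀ : ℝ) + 2) ≠ 0 := by positivity
      have hY : ((α i₀ : ℝ) + 1) ≠ 0 := by positivity
      push_cast
      field_simp
    -- the remainder
    set r : MvPolynomial (Fin n) ℝ :=
      ∑ α ∈ q.support, ∑ i ∈ Finset.univ.erase i₀,
        pderiv i (pderiv i (monomial (α + Finsupp.single i₀ 2) (c α))) with hr
    have hlap : lapOp n u₀ = r + q := by
      rw [lapOp_apply]
      have h1 : ∀ i : Fin n, pderiv i (pderiv i u₀)
          = ∑ α ∈ q.support,
              pderiv i (pderiv i (monomial (α + Finsupp.single i₀ 2) (c α))) := by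
        intro i
        rw [hu₀, map_sum, map_sum]
      simp only [h1]
      rw [Finset.sum_comm]
      have h2 : ∀ α ∈ q.support,
          (∑ i : Fin n, pderiv i (pderiv i (monomial (α + Finsupp.single i₀ 2) (c α))))
          = (∑ i ∈ Finset.univ.erase i₀,
              pderiv i (pderiv i (monomial (α + Finsupp.single i₀ 2) (c α))))
            + monomial α (q.coeff α) := by
        intro α hα
        rw [← hmono α hα, Finset.sum_erase_add _ _ (Finset.mem_univ i₀)]
      rw [Finset.sum_congr rfl h2, Finset.sum_add_distrib, ← hr,
        MvPolynomial.support_sum_monomial_coeff]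
    -- analysis of each remainder term
    have hterm : ∀ α ∈ q.support, ∀ i ∈ Finset.univ.erase i₀,
        ∃ (β : Fin n →₀ ℕ) (co : ℝ),
          pderiv i (pderiv i (monomial (α + Finsupp.single i₀ 2) (c α))) = monomial β co ∧
          (co ≠ 0 → β.degree = d ∧ 2 ≤ α i) ∧ β i₀ = α i₀ + 2 := by
      intro α hα i hi
      have hne : i ≠ i₀ := (Finset.mem_erase.mp hi).1
      refine ⟨α + Finsupp.single i₀ 2 - Finsupp.single i 1 - Finsupp.single i 1,
        _, pderiv_sq_monomial i _ (c α), ?_, ?_⟩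
      · intro hco
        have hv1 : ((α + Finsupp.single i₀ 2 : Fin n →₀ ℕ) i) = α i := by
          simp [Finsupp.single_apply, (Ne.symm hne : i₀ ≠ i)]
        have h2 : 2 ≤ α i := by
          by_contra h2
          apply hco
          rw [hv1]
          interval_cases h : α i <;> simp
        refine ⟨?_, h2⟩
        have hplus : (α + Finsupp.single i₀ 2 - Finsupp.single i 1 - Finsupp.single i 1)
            + Finsupp.single i 2 = α + Finsupp.single i₀ 2 := by
          ext a
          rcases eq_or_ne a i with rfl | h'
          · simp only [Finsupp.add_apply, Finsupp.tsub_apply, Finsupp.single_eq_same,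
              Finsupp.single_eq_of_ne (Ne.symm hne)]
            omega
          · simp only [Finsupp.add_apply, Finsupp.tsub_apply,
              Finsupp.single_eq_of_ne' h'.symm]
            omega
        have := congrArg Finsupp.degree hplus
        rw [degree_add_single, degree_add_single, hdeg α hα] at this
        omega
      · simp [Finsupp.tsub_apply, Finsupp.add_apply, Finsupp.single_apply,
          (hne : i ≠ i₀)]
    -- the remainder is homogeneous of degree d
    have hrhom : r.IsHomogeneous d := by
      rw [hr]
      apply MvPolynomial.IsHomogeneous.sum
      intro α hα
      apply MvPolynomial.IsHomogeneous.sum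
      intro i hi
      obtain ⟨β, co, he, hco, _⟩ := hterm α hα i hi
      rw [he]
      by_cases h0 : co = 0
      · rw [h0, monomial_zero]
        exact isHomogeneous_zero _ _ _
      · exact isHomogeneous_monomial _ ((hco h0).1)
    -- every monomial of the remainder has larger `i₀`-degree
    have hrsupp : ∀ β ∈ r.support, ∃ α ∈ q.support, β i₀ = α i₀ + 2 := by
      intro β hβ
      rw [hr] at hβ
      obtain ⟨α, hα, hβ⟩ := Finset.mem_biUnion.mp (MvPolynomial.support_sum hβ)
      obtain ⟨i, hi, hβ⟩ := Finset.mem_biUnion.mp (MvPolynomial.support_sum hβ)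
      obtain ⟨β', co, he, _, hβ'⟩ := hterm α hα i hi
      rw [he] at hβ
      have := MvPolynomial.support_monomial_subset hβ
      rw [Finset.mem_singleton] at this
      exact ⟨α, hα, this ▸ hβ'⟩
    rcases Nat.eq_zero_or_pos m with hm | hm
    · -- base case: the remainder vanishes
      have hr0 : r = 0 := by
        rw [hr]
        refine Finset.sum_eq_zero fun α hα => Finset.sum_eq_zero fun i hi => ?_
        obtain ⟨β, co, he, hco, _⟩ := hterm α hα i hi
        rw [he]
        have hαi₀ : α i₀ = d :=
          le_antisymm (hdeg α hα ▸ Finsupp.le_degree i₀ α)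
            (by simpa [hm] using hsup α hα)
        have h0 : co = 0 := by
          by_contra h0
          obtain ⟨_, h2⟩ := hco h0
          have hle := add_apply_le_degree α (show i ≠ i₀ from (Finset.mem_erase.mp hi).1)
          rw [hdeg α hα] at hle
          omega
        rw [h0, monomial_zero]
      exact ⟨u₀, hu₀hom, by rw [hlap, hr0, zero_add]⟩
    · -- inductive step
      have hstep : ∀ β ∈ r.support, d ≤ β i₀ + (m - 2) := by
        intro β hβ
        obtain ⟨α, hα, hβα⟩ := hrsupp β hβ
        have := hsup α hα
        omega
      obtain ⟨v, hvhom, hv⟩ := ih (m - 2) (by omega) r hrhom hstep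
      exact ⟨u₀ - v, hu₀hom.sub hvhom, by rw [map_sub, hlap, hv]; ring⟩

/-- Lemma 3.3 of the paper: for every nonnegative integer `d` and every `n ≥ 1`,
the Laplacian `Δ : A_{d+2}ⁿ → A_dⁿ` on homogeneous polynomials is surjective. -/
theorem lapOp_surjective (n d : ℕ) (hn : 1 ≤ n) :
    ∀ q ∈ homogeneousSubmodule (Fin n) ℝ d,
      ∃ u ∈ homogeneousSubmodule (Fin n) ℝ (d + 2), lapOp n u = q := by
  intro q hq
  obtain ⟨u, hu, hlu⟩ := lap_aux n d ⟨0, hn⟩ d q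
    ((mem_homogeneousSubmodule _ _).mp hq)
    (fun α _ => Nat.le_add_left d (α ⟨0, hn⟩))
  exact ⟨u, (mem_homogeneousSubmodule _ _).mpr hu, hlu⟩
end
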